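/- The map M_{n,d} sending a standard Young tableau τ of hook shape (d, 1^{n-d}) to the path γ_1γ_2...γ_n with γ_n = NE, γ_{n-i} = NE if i ∈ Des(τ) and γ_{n-i} = D otherwise, is a bijection from SYT(d,1^{n-d}) to the set of Schröder paths in an n×n grid with d-1 diagonal steps, area 0, and ending in NE. Moreover maj(τ) = bounce(M_{n,d}(τ)). -/

import Mathlib

open scoped Classical

inductive Step : Type
  | N | E | D
deriving DecidableEq, Repr

instance : Fintype Step :=
  ⟨{Step.N, Step.E, Step.D}, by intro x; cases x <;> simp⟩

open Step

/-- number of occurrences of the letter `s` in the word `w` -/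
def cnt (s : Step) (w : List Step) : ℕ := w.count s

/-- Schröder (or Dyck, if no `D`s) path in an `n × n` grid: every prefix has at
least as many `N`s as `E`s, and the totals agree. -/
def IsSchroeder (w : List Step) : Prop :=
  (∀ p : List Step, p <+: w → cnt E p ≤ cnt N p) ∧ cnt N w = cnt E w

/-- words that are concatenations of blocks `NE` and `D` -/
inductive IsNED : List Step → Prop
  | nil : IsNED []
  | ne {w} : IsNED w → IsNED (N :: E :: w)
  | d {w} : IsNED w → IsNED (D :: w)

/-- area of a Schröder path: the number of lower triangles between the path and the
main diagonal, computed as the sum over `N` and `D` steps of the height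
`#N - #E` of the starting point of the step above the diagonal. -/
def areaAux : ℕ → List Step → ℕ
  | _, [] => 0
  | h, N :: w => h + areaAux (h+1) w
  | h, D :: w => h + areaAux h w
  | h, E :: w => areaAux (h-1) w

def area (w : List Step) : ℕ := areaAux 0 w

/-- area of an `N/E` lattice path in a rectangular grid: the number of boxes under
the path, i.e. the sum over `E` steps of the number of `N` steps before it. -/
def areaNEAux : ℕ → List Step → ℕ
  | _, [] => 0
  | h, N :: w => areaNEAux (h+1) w
  | h, E :: w => h + areaNEAux h w
  | h, D :: w => areaNEAux h w

def areaNE (w : List Step) : ℕ := areaNEAux 0 w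

/-- number of `N`s occurring before the `(j+1)`-st `E` (`j` is 0-indexed);
this is the height of the path above the horizontal interval `[j, j+1]`. -/
def nBefore : List Step → ℕ → ℕ
  | [], _ => 0
  | N :: w, j => 1 + nBefore w j
  | E :: w, j => if j = 0 then 0 else nBefore w (j-1)
  | D :: w, j => nBefore w j

/-- number of `E`s occurring before the `(i+1)`-st `N` (`i` is 0-indexed). -/
def eBefore : List Step → ℕ → ℕ
  | [], _ => 0
  | E :: w, i => 1 + eBefore w i
  | N :: w, i => if i = 0 then 0 else eBefore w (i-1)
  | D :: w, i => eBefore w i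

/-- number of `D`s occurring after the `e`-th `E` (`e` is 1-indexed). -/
def dAfterE : List Step → ℕ → ℕ
  | [], _ => 0
  | E :: w, e => if e ≤ 1 then cnt D w else dAfterE w (e-1)
  | D :: w, e => dAfterE w e
  | N :: w, e => dAfterE w e

/-- Combined computation of `bounce(Γ(γ)) + numph(γ)` along the bounce path of
`Γ(γ)`.  Here `g` is the Schröder path, `w = Γ(g)` is the underlying Dyck path,
`nn` its size; the bounce path has corners (peaks) at the positions
`j₀ = 0, jₖ₊₁ = nBefore w jₖ`; each intermediate return `jₖ₊₁ < nn` contributes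
`nn - jₖ₊₁` to the bounce of `Γ(g)`, and the peak with corner at `jₖ` is the start
of the `(jₖ+1)`-st east step, contributing to numph the number of diagonal steps of
`g` above it, i.e. after that east step. -/
def bounceAux (g w : List Step) (nn : ℕ) : ℕ → ℕ → ℕ
  | 0, _ => 0
  | fuel+1, j =>
      dAfterE g (j+1) +
        (if nn ≤ nBefore w j ∨ nBefore w j ≤ j then 0
         else (nn - nBefore w j) + bounceAux g w nn fuel (nBefore w j))

/-- the bounce statistic of a Schröder path: `bounce(Γ(γ)) + numph(γ)` -/
def bounce (g : List Step) : ℕ :=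
  let w := g.filter (fun s => s ≠ D)
  let nn := cnt E w
  if nn = 0 then 0 else bounceAux g w nn g.length 0

/-- the (signed) area coordinate `a_i = m·i - (#E before the (i+1)-st N)` of line `i`
(0-indexed) for a path in an `n × mn` grid. -/
def aLine (m : ℕ) (g : List Step) (i : ℕ) : ℤ := (m : ℤ) * i - eBefore g i

/-- an `(n, mn)`-Dyck path: `n` north steps, `mn` east steps, no diagonal steps,
staying weakly above the main diagonal. -/
def IsParkingPath (n m : ℕ) (g : List Step) : Prop :=
  (∀ s ∈ g, s ≠ D) ∧ cnt N g = n ∧ cnt E g = m * n ∧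
    ∀ p : List Step, p <+: g → cnt E p ≤ m * cnt N p

/-- an `(n, mn)`-parking function: an `(n,mn)`-Dyck path labelled by a permutation
`w` of `{0, …, n-1}` whose labels increase within each column. -/
def IsParking (n m : ℕ) (g : List Step) (w : Fin n → Fin n) : Prop :=
  IsParkingPath n m g ∧ Function.Bijective w ∧
    ∀ i j : Fin n, (j : ℕ) = (i : ℕ) + 1 → eBefore g (i : ℕ) = eBefore g (j : ℕ) → w i < w j

/-- the diagonal inversion statistic of an `(n, mn)`-parking function -/
def dinv (n m : ℕ) (g : List Step) (w : Fin n → Fin n) : ℤ :=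
  ∑ i : Fin n, ∑ j : Fin n,
    if (i : ℕ) < (j : ℕ) then
      (if w i < w j then max 0 ((m : ℤ) - |aLine m g (i : ℕ) - aLine m g (j : ℕ)|) else 0) +
        (if w j < w i then max 0 ((m : ℤ) - |aLine m g (j : ℕ) - aLine m g (i : ℕ) + 1|) else 0)
    else 0

/-- the number of descents of the word `w` -/
def desNum (n : ℕ) (w : Fin n → Fin n) : ℕ :=
  ((Finset.range (n-1)).filter fun i =>
    ∃ hj : i + 1 < n, w ⟨i+1, hj⟩ < w ⟨i, Nat.lt_of_succ_lt hj⟩).card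

/-- the major index of the word `w` (with positions 1-indexed as usual) -/
def majStat (n : ℕ) (w : Fin n → Fin n) : ℕ :=
  ∑ i ∈ (Finset.range (n-1)).filter (fun i =>
    ∃ hj : i + 1 < n, w ⟨i+1, hj⟩ < w ⟨i, Nat.lt_of_succ_lt hj⟩), (i+1)

/-- the reading word of a labelled path in an `n × mn` grid: labels are read along
diagonals parallel to the main diagonal, starting with the farthest diagonal,
each diagonal being read from top-right to bottom-left. -/
def readWord (n m : ℕ) (g : List Step) (lab : ℕ → ℕ) : List ℕ :=
  ((List.range (m * n + 1)).map fun k =>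
    (((List.range n).reverse.filter fun i => aLine m g i = (m * n : ℤ) - k).map lab)).flatten

/-- the labelling function `ℕ → ℕ` associated to a permutation of `Fin n` -/
def labOf {n : ℕ} (w : Fin n → Fin n) : ℕ → ℕ :=
  fun i => if h : i < n then (w ⟨i, h⟩ : ℕ) else 0

/-- one step of the algorithm `φ`, on the reversed word: find the rightmost
(i.e. first in the reversed word) east step not followed by an east step,
and swap it with the letter following it. -/
def phiRevAux : List Step → List Step
  | a :: E :: t => if a ≠ E then E :: a :: t else a :: phiRevAux (E :: t)
  | a :: t => a :: phiRevAux t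
  | [] => []

/-- one step of the algorithm `φ` -/
def phiStep (w : List Step) : List Step := (phiRevAux w.reverse).reverse

/-- the sequence `φ(γ) = (γ₀, γ₁, …, γ_{bounce γ})` produced by the algorithm -/
def phiSeq (g : List Step) : List (List Step) :=
  (List.range (bounce g + 1)).map fun i => phiStep^[i] g

/-- the union of all sequences `φ(γ)` over area-0 Schröder paths with `n` blocks -/
def phiUniv (n : ℕ) : Set (List Step) :=
  {p | ∃ g, IsNED g ∧ cnt N g + cnt D g = n ∧ p ∈ phiSeq g}

/-- the map replacing each block `NE` by `N` and each `D` by `E` -/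
def theta : List Step → List Step
  | N :: E :: w => N :: theta w
  | D :: w => E :: theta w
  | _ :: w => theta w
  | [] => []

/-- the cells of the hook-shaped Young diagram `(d, 1^{n-d})` (row 0 is the arm). -/
def hookCells (n d : ℕ) : Finset (ℕ × ℕ) :=
  ((Finset.range d).image fun c => ((0 : ℕ), c)) ∪
    ((Finset.range (n - d + 1)).image fun r => (r, (0 : ℕ)))

/-- a standard Young tableau of hook shape `(d, 1^{n-d})`: `pos i` is the cell
`(row, column)` containing the entry `i+1`; entries increase along rows and columns. -/
structure HookSYT (n d : ℕ) where
  pos : Fin n → ℕ × ℕ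
  mem : ∀ i, pos i ∈ hookCells n d
  inj : Function.Injective pos
  rowInc : ∀ i j : Fin n, (pos i).1 = (pos j).1 → (pos i).2 < (pos j).2 → i < j
  colInc : ∀ i j : Fin n, (pos i).2 = (pos j).2 → (pos i).1 < (pos j).1 → i < j

/-- the descent set of a standard Young tableau: entries `i ∈ {1, …, n-1}` such that
the entry `i+1` lies in a strictly higher row than `i`. -/
def Des {n d : ℕ} (τ : HookSYT n d) : Finset ℕ :=
  (Finset.Icc 1 (n-1)).filter fun i =>
    ∃ hi : i < n, ∃ hi' : i - 1 < n, (τ.pos ⟨i - 1, hi'⟩).1 < (τ.pos ⟨i, hi⟩).1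

/-- the major index of a standard Young tableau -/
def majT {n d : ℕ} (τ : HookSYT n d) : ℕ := ∑ i ∈ Des τ, i

/-- the number of descents of a standard Young tableau -/
def desT {n d : ℕ} (τ : HookSYT n d) : ℕ := (Des τ).card

/-- the maximum of the descent set -/
def maxDes {n d : ℕ} (τ : HookSYT n d) : ℕ := (Des τ).sup id

/-- the map `M_{n,d}`: the path `γ₁γ₂⋯γₙ` with `γₙ = NE`, `γ_{n-i} = NE` if
`i ∈ Des τ` and `γ_{n-i} = D` otherwise -/
def Mmap (n d : ℕ) (τ : HookSYT n d) : List Step :=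
  (((List.range n).map fun j =>
    if j = n - 1 then [N, E]
    else if (n - 1 - j) ∈ Des τ then [N, E] else [D])).flatten

/-- the map `S_{n,d}`: the path `γ₁⋯γ_{n-1}` with `γ_{n-i} = NNEE` if
`i = max Des τ` and `1 ∈ Des τ`, `γ_{n-i} = NDE` if `i = max Des τ` and
`1 ∉ Des τ`, `γ_{n-i} = NE` if `i = 1` or `i ∈ Des τ ∖ {max Des τ}`, and
`γ_{n-i} = D` otherwise. -/
def Smap (n d : ℕ) (τ : HookSYT n d) : List Step :=
  (((List.range (n-1)).map fun j =>
    if (n - 1 - j) = maxDes τ then (if 1 ∈ Des τ then [N,N,E,E] else [N,D,E])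
    else if (n - 1 - j) = 1 ∨ (n - 1 - j) ∈ Des τ then [N,E] else [D])).flatten

/-- the set `V_{n,d}` of Schröder paths of the form `Dʲ NNEE u` or `Dʲ NDE u`
with `u ∈ {NE,D}* NE`, having `n-d+1` north steps and `d-1` diagonal steps. -/
def Vset (n d : ℕ) : Set (List Step) :=
  {g | (∃ j u, IsNED u ∧
      (g = List.replicate j D ++ [N,N,E,E] ++ (u ++ [N,E]) ∨
       g = List.replicate j D ++ [N,D,E] ++ (u ++ [N,E]))) ∧
     cnt N g = n - d + 1 ∧ cnt D g = d - 1}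

/-- Schröder paths in an `n × n` grid with `dd` diagonal steps, area `a`,
ending with `NE` -/
def SchT (n dd a : ℕ) : Set (List Step) :=
  {g | IsSchroeder g ∧ cnt D g = dd ∧ cnt N g = n - dd ∧ area g = a ∧ ∃ u, g = u ++ [N, E]}

/-- the 'upper' forms: `Dʲ NNEE γ' NE NE` or `γ' NE Dʲ NNEE γ''` -/
def UpperForm (g : List Step) : Prop :=
  (∃ j u, IsNED u ∧ g = List.replicate j D ++ [N,N,E,E] ++ u ++ [N,E,N,E]) ∨
  (∃ u j v, IsNED u ∧ g = u ++ [N,E] ++ List.replicate j D ++ [N,N,E,E] ++ v)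

/-- the 'lower' forms: `Dʲ NNEE γ' D NE` or `γ' NDE Dʲ NE γ''` -/
def LowerForm (g : List Step) : Prop :=
  (∃ j u, IsNED u ∧ g = List.replicate j D ++ [N,N,E,E] ++ u ++ [D,N,E]) ∨
  (∃ u j v, IsNED u ∧ g = u ++ [N,D,E] ++ List.replicate j D ++ [N,E] ++ v)

/-- the number of distinct columns of the path -/
def Tcols (n : ℕ) (g : List Step) : ℕ :=
  ((Finset.range n).image fun i => eBefore g i).card

/-- the `q`-integer `[k]_q = 1 + q + ⋯ + q^{k-1}` as a polynomial -/
noncomputable def qInt (k : ℕ) : Polynomial ℤ := ∑ i ∈ Finset.range k, Polynomial.X ^ i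

/-- the `q`-factorial `[k]!_q` -/
noncomputable def qFact (k : ℕ) : Polynomial ℤ := ∏ i ∈ Finset.range k, qInt (i+1)

/-!
An area-0 Schröder path is a word in the blocks `NE` and `D`, i.e. a list of booleans. Its
Dyck path `Γ(γ)` is `(NE)^k`, whose bounce path returns to the diagonal after every step, so
`bounce(Γ(γ)) + numph(γ)` adds up, over the `NE` blocks, the number of blocks after each. For
`M_{n,d}(τ)` the `NE` blocks stand at the distances `i ∈ Des τ ∪ {0}` from the end, which
gives `maj τ`.

A hook tableau is determined by which entries lie in its leg: the entries of the leg and those of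
the arm are each increasing, so the cell of an entry is the number of earlier entries on the same
side. The entries of the leg are exactly the descents, and every `S ⊆ {1, …, n-1}` with `n - d`
elements arises this way. So `τ ↦ Des τ` is a bijection onto these sets, and reading such a set
as a block word is a bijection onto the area-0 paths with `d - 1` diagonal steps ending in `NE`.
-/

open Finset

def ofBlocks : List Bool → List Step
  | [] => []
  | true :: l => N :: E :: ofBlocks l
  | false :: l => D :: ofBlocks l

@[simp] lemma ofBlocks_nil : ofBlocks [] = [] := rfl
@[simp] lemma ofBlocks_cons_true (l : List Bool) :
    ofBlocks (true :: l) = N :: E :: ofBlocks l := rfl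
@[simp] lemma ofBlocks_cons_false (l : List Bool) : ofBlocks (false :: l) = D :: ofBlocks l := rfl

lemma ofBlocks_append (a b : List Bool) : ofBlocks (a ++ b) = ofBlocks a ++ ofBlocks b := by
  induction a with
  | nil => rfl
  | cons x l ih => cases x <;> simp [ih]

lemma ofBlocks_injective : Function.Injective ofBlocks
  | [], [], _ => rfl
  | [], true :: _, h | [], false :: _, h | true :: _, [], h | false :: _, [], h
  | true :: _, false :: _, h | false :: _, true :: _, h => by simp at h
  | true :: l, true :: m, h => by
    simp only [ofBlocks_cons_true, List.cons.injEq, true_and] at h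
    rw [ofBlocks_injective h]
  | false :: l, false :: m, h => by
    simp only [ofBlocks_cons_false, List.cons.injEq, true_and] at h
    rw [ofBlocks_injective h]

@[simp] lemma cnt_N_ofBlocks (b : List Bool) : cnt N (ofBlocks b) = b.count true := by
  induction b with
  | nil => rfl
  | cons x l ih => cases x <;> simp_all [cnt]

@[simp] lemma cnt_E_ofBlocks (b : List Bool) : cnt E (ofBlocks b) = b.count true := by
  induction b with
  | nil => rfl
  | cons x l ih => cases x <;> simp_all [cnt]

@[simp] lemma cnt_D_ofBlocks (b : List Bool) : cnt D (ofBlocks b) = b.count false := by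
  induction b with
  | nil => rfl
  | cons x l ih => cases x <;> simp_all [cnt]

lemma length_le_length_ofBlocks (b : List Bool) : b.length ≤ (ofBlocks b).length := by
  induction b with
  | nil => simp
  | cons x l ih =>
    cases x <;> simp only [List.length_cons, ofBlocks_cons_false, ofBlocks_cons_true] <;> omega

lemma area_ofBlocks (b : List Bool) : area (ofBlocks b) = 0 := by
  induction b with
  | nil => rfl
  | cons x l ih => cases x <;> simpa [area, areaAux] using ih

lemma isSchroeder_ofBlocks (b : List Bool) : IsSchroeder (ofBlocks b) := by
  refine ⟨fun p hp => ?_, by simp⟩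
  induction b generalizing p with
  | nil => simp_all [cnt]
  | cons x l ih =>
    rcases p with _ | ⟨s, p⟩
    · simp [cnt]
    cases x
    · simp only [ofBlocks_cons_false, List.cons_prefix_cons] at hp
      obtain ⟨rfl, hp⟩ := hp
      simpa [cnt] using ih p hp
    · simp only [ofBlocks_cons_true, List.cons_prefix_cons] at hp
      obtain ⟨rfl, hp⟩ := hp
      rcases p with _ | ⟨s, p⟩
      · simp [cnt]
      simp only [List.cons_prefix_cons] at hp
      obtain ⟨rfl, hp⟩ := hp
      simpa [cnt, List.count_cons] using ih p hp

lemma IsSchroeder.of_cons_D {w : List Step} (h : IsSchroeder (D :: w)) : IsSchroeder w :=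
  ⟨fun p hp => by simpa [cnt] using h.1 (D :: p) (List.cons_prefix_cons.mpr ⟨rfl, hp⟩),
    by simpa [cnt] using h.2⟩

lemma IsSchroeder.of_cons_N_E {w : List Step} (h : IsSchroeder (N :: E :: w)) :
    IsSchroeder w :=
  ⟨fun p hp => by
    simpa [cnt, List.count_cons] using h.1 (N :: E :: p) (by simpa using hp),
    by simpa [cnt, List.count_cons] using h.2⟩

theorem exists_ofBlocks_eq_of_area_eq_zero :
    ∀ {g : List Step}, IsSchroeder g → area g = 0 → ∃ b, ofBlocks b = g
  | [], _, _ => ⟨[], rfl⟩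
  | E :: w, hg, _ => absurd (hg.1 [E] ⟨w, rfl⟩) (by simp [cnt])
  | [N], hg, _ => by simpa [cnt] using hg.2
  | N :: N :: w, _, ha | N :: D :: w, _, ha => by simp [area, areaAux] at ha
  | D :: w, hg, ha =>
    have ⟨b, hb⟩ := exists_ofBlocks_eq_of_area_eq_zero hg.of_cons_D
      (by simpa [area, areaAux] using ha)
    ⟨false :: b, by simp [hb]⟩
  | N :: E :: w, hg, ha =>
    have ⟨b, hb⟩ := exists_ofBlocks_eq_of_area_eq_zero hg.of_cons_N_E
      (by simpa [area, areaAux] using ha)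
    ⟨true :: b, by simp [hb]⟩

lemma exists_ofBlocks_eq_append_iff {b : List Bool} :
    (∃ u, ofBlocks b = u ++ [N, E]) ↔ b.getLast? = some true := by
  rcases b.eq_nil_or_concat' with rfl | ⟨c, x, rfl⟩
  · simp
  · cases x
    · simp only [ofBlocks_append, ofBlocks_cons_false, ofBlocks_nil, List.getLast?_concat]
      refine iff_of_false (fun ⟨u, h⟩ => ?_) (by simp)
      simpa using congrArg List.getLast? h
    · simp [ofBlocks_append]

lemma filter_ne_D_ofBlocks (b : List Bool) :
    (ofBlocks b).filter (fun s => s ≠ D) = ofBlocks (List.replicate (b.count true) true) := by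
  induction b with
  | nil => rfl
  | cons x l ih => cases x <;> simp_all [List.replicate_succ]

lemma nBefore_ofBlocks_replicate (k j : ℕ) :
    nBefore (ofBlocks (List.replicate k true)) j = min (j + 1) k := by
  induction k generalizing j with
  | zero => simp [nBefore]
  | succ k ih =>
    rw [List.replicate_succ, ofBlocks_cons_true]
    cases j with
    | zero => simp [nBefore]
    | succ j =>
      simp only [nBefore, ih, Nat.add_one_ne_zero, if_false, Nat.add_sub_cancel]
      omega

-- `k - 1 - t` is the bounce contribution `k - (t + 1)` of the corner `t`, and `0` at the last one.
lemma bounceAux_ofBlocks_replicate (g : List Step) {k : ℕ} :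
    ∀ fuel j, j < k → k ≤ j + fuel →
      bounceAux g (ofBlocks (List.replicate k true)) k fuel j =
        ∑ t ∈ Ico j k, (dAfterE g (t + 1) + (k - 1 - t))
  | 0, j, hj, hfuel => by omega
  | fuel + 1, j, hj, hfuel => by
    rw [bounceAux, nBefore_ofBlocks_replicate, Finset.sum_eq_sum_Ico_succ_bot hj]
    rcases Nat.lt_or_ge (j + 1) k with hlt | hge
    · rw [min_eq_left hlt.le, if_neg (by omega),
        bounceAux_ofBlocks_replicate g fuel (j + 1) hlt (by omega)]
      omega
    · rw [if_pos (by omega), show j + 1 = k by omega, Finset.Ico_self, Finset.sum_empty]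
      omega

-- For blocks `γ₁ ⋯ γₙ` this is `Σ {i : γ_{n-i} = NE}`.
def tailLengthSum : List Bool → ℕ
  | [] => 0
  | x :: l => (if x then l.length else 0) + tailLengthSum l

lemma sum_dAfterE_ofBlocks (b : List Bool) :
    ∑ t ∈ range (b.count true), (dAfterE (ofBlocks b) (t + 1) + (b.count true - 1 - t)) =
      tailLengthSum b := by
  induction b with
  | nil => rfl
  | cons x l ih =>
    cases x
    · simpa [dAfterE, tailLengthSum] using ih
    · have hshift : ∀ t ∈ range (l.count true),
          dAfterE (ofBlocks (true :: l)) (t + 1 + 1) + (l.count true + 1 - 1 - (t + 1)) =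
            dAfterE (ofBlocks l) (t + 1) + (l.count true - 1 - t) := by
        intro t _
        simp only [ofBlocks_cons_true, dAfterE, if_neg (show ¬t + 1 + 1 ≤ 1 by omega),
          Nat.add_sub_cancel]
        omega
      rw [List.count_cons_self, Finset.sum_range_succ', Finset.sum_congr rfl hshift, ih]
      have := List.count_true_add_count_false l
      simp only [ofBlocks_cons_true, zero_add, dAfterE, le_refl, if_true, cnt_D_ofBlocks,
        tailLengthSum]
      omega

lemma bounce_ofBlocks {b : List Bool} (hb : true ∈ b) :
    bounce (ofBlocks b) = tailLengthSum b := by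
  have hk : 0 < b.count true := List.count_pos_iff.mpr hb
  have hfuel : b.count true ≤ (ofBlocks b).length :=
    List.count_le_length.trans (length_le_length_ofBlocks b)
  simp only [bounce, filter_ne_D_ofBlocks, cnt_E_ofBlocks, List.count_replicate_self]
  rw [if_neg hk.ne', bounceAux_ofBlocks_replicate _ _ 0 hk (by omega), ← range_eq_Ico,
    sum_dAfterE_ofBlocks]

lemma flatten_map_ite_eq_ofBlocks (f : ℕ → Bool) (L : List ℕ) :
    (L.map fun j => if f j then [N, E] else [D]).flatten = ofBlocks (L.map f) := by
  induction L with
  | nil => rfl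
  | cons j L ih => cases hf : f j <;> simp [hf, ih]

lemma count_true_map_range (f : ℕ → Bool) (n : ℕ) :
    ((List.range n).map f).count true = #{j ∈ range n | f j} := by
  rw [← Nat.count_eq_card_filter_range, Nat.count, List.count, List.countP_map]
  rfl

lemma tailLengthSum_map_range (f : ℕ → Bool) (n : ℕ) :
    tailLengthSum ((List.range n).map f) = ∑ j ∈ range n, if f j then n - 1 - j else 0 := by
  induction n generalizing f with
  | zero => rfl
  | succ n ih =>
    rw [List.range_succ_eq_map, List.map_cons, List.map_map, tailLengthSum, ih,
      Finset.sum_range_succ']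
    simp only [Function.comp_apply, List.length_map, List.length_range]
    split_ifs <;> simp [Nat.sub_sub, Nat.add_comm]

def descentBlocks (n : ℕ) (S : Finset ℕ) : List Bool :=
  (List.range n).map fun j => decide (j = n - 1 ∨ n - 1 - j ∈ S)

lemma Mmap_eq_ofBlocks {n d : ℕ} (τ : HookSYT n d) :
    Mmap n d τ = ofBlocks (descentBlocks n (Des τ)) := by
  rw [Mmap, descentBlocks, ← flatten_map_ite_eq_ofBlocks]
  congr 2
  funext j
  by_cases h₁ : j = n - 1 <;> by_cases h₂ : n - 1 - j ∈ Des τ <;> simp [h₁, h₂]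

section descentBlocks

variable {n : ℕ} {S : Finset ℕ}

lemma length_descentBlocks : (descentBlocks n S).length = n := by
  simp [descentBlocks]

lemma count_true_descentBlocks (hS : S ⊆ Icc 1 (n - 1)) (hn : 1 ≤ n) :
    (descentBlocks n S).count true = #S + 1 := by
  have h0 : 0 ∉ S := fun h => by simpa using hS h
  rw [descentBlocks, count_true_map_range, ← card_insert_of_notMem h0]
  have hlt : ∀ i ∈ S, i < n := fun i hi => by have := mem_Icc.mp (hS hi); omega
  refine card_nbij' (n - 1 - ·) (n - 1 - ·) ?_ ?_ ?_ ?_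
  · intro j hj
    simp only [coe_filter, mem_range, decide_eq_true_eq, Set.mem_ofPred_eq] at hj
    simp only [coe_insert, Set.mem_insert_iff, mem_coe]
    exact hj.2.imp (by omega) id
  · intro i hi
    simp only [coe_insert, Set.mem_insert_iff, mem_coe] at hi
    simp only [coe_filter, mem_range, decide_eq_true_eq, Set.mem_ofPred_eq]
    rcases hi with rfl | hi
    · omega
    · have := hlt i hi
      exact ⟨by omega, Or.inr (by rwa [show n - 1 - (n - 1 - i) = i by omega])⟩
  · intro j hj
    simp only [coe_filter, mem_range, Set.mem_ofPred_eq] at hj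
    dsimp only
    omega
  · intro i hi
    simp only [coe_insert, Set.mem_insert_iff, mem_coe] at hi
    dsimp only
    rcases hi with rfl | hi
    · omega
    · have := hlt i hi
      omega

lemma tailLengthSum_descentBlocks (hS : S ⊆ Icc 1 (n - 1)) :
    tailLengthSum (descentBlocks n S) = ∑ i ∈ S, i := by
  have hlt : ∀ i ∈ S, i < n := fun i hi => by have := mem_Icc.mp (hS hi); omega
  have hterm : ∀ j ∈ range n, (if decide (n - 1 - j = n - 1 ∨ n - 1 - (n - 1 - j) ∈ S)
      then n - 1 - (n - 1 - j) else 0) = if j ∈ S then j else 0 := by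
    intro j hj
    rw [mem_range] at hj
    rw [show n - 1 - (n - 1 - j) = j by omega]
    by_cases hjS : j ∈ S
    · simp [hjS]
    · simp only [hjS, or_false, decide_eq_true_eq, ite_eq_right_iff, if_false]
      omega
  rw [descentBlocks, tailLengthSum_map_range, ← Finset.sum_range_reflect,
    Finset.sum_congr rfl hterm, Finset.sum_ite_mem,
    Finset.inter_eq_right.mpr fun i hi => mem_range.mpr (hlt i hi)]

lemma descentBlocks_injOn : Set.InjOn (descentBlocks n) {S | S ⊆ Icc 1 (n - 1)} := by
  intro S₁ h₁ S₂ h₂ h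
  ext i
  by_cases hi : i ∈ Icc 1 (n - 1)
  · rw [mem_Icc] at hi
    have hj := List.map_inj_left.mp h (n - 1 - i) (List.mem_range.mpr (by omega))
    simpa [show n - 1 - (n - 1 - i) = i by omega, show n - 1 - i ≠ n - 1 by omega] using hj
  · exact iff_of_false (fun h => hi (h₁ h)) (fun h => hi (h₂ h))

lemma exists_descentBlocks_eq {b : List Bool} (hlen : b.length = n)
    (hlast : b.getLast? = some true) :
    ∃ S ⊆ Icc 1 (n - 1), descentBlocks n S = b := by
  refine ⟨{i ∈ Icc 1 (n - 1) | b.getD (n - 1 - i) false}, filter_subset _ _, ?_⟩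
  rw [List.getLast?_eq_getElem?, hlen] at hlast
  refine List.ext_getElem (by rw [length_descentBlocks, hlen]) fun j hj hj' => ?_
  simp only [descentBlocks, List.getElem_map, List.getElem_range]
  by_cases hjn : j = n - 1
  · subst hjn
    simpa [List.getElem?_eq_getElem hj'] using hlast.symm
  · have hj : j < n := by rwa [length_descentBlocks] at hj
    simp [hjn, show n - 1 - (n - 1 - j) = j by omega, show 1 ≤ n - 1 - j by omega,
      List.getElem?_eq_getElem hj']

lemma getLast?_descentBlocks (S : Finset ℕ) (hn : 1 ≤ n) :
    (descentBlocks n S).getLast? = some true := by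
  rw [List.getLast?_eq_getElem?, length_descentBlocks,
    List.getElem?_eq_getElem (by rw [length_descentBlocks]; omega)]
  simp [descentBlocks]

end descentBlocks

theorem eq_card_filter_lt_of_strictMonoOn {ι : Type*} [Fintype ι] [LinearOrder ι]
    {p : ι → Prop} [DecidablePred p] {f : ι → ℕ} (hf : StrictMonoOn f {m | p m})
    (hdown : ∀ k, p k → ∀ t < f k, ∃ m, p m ∧ f m = t) {k : ι} (hk : p k) :
    f k = #{m | p m ∧ m < k} := by
  have himage : image f {m | p m ∧ m < k} = range (f k) := by
    ext t
    simp only [mem_image, mem_filter, mem_univ, true_and, mem_range]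
    constructor
    · rintro ⟨m, ⟨hm, hmk⟩, rfl⟩
      exact hf hm hk hmk
    · intro ht
      obtain ⟨m, hm, rfl⟩ := hdown k hk t ht
      exact ⟨m, ⟨hm, lt_of_not_ge fun hkm => (hf.monotoneOn hk hm hkm).not_gt ht⟩, rfl⟩
  rw [← card_range (f k), ← himage, card_image_of_injOn]
  exact hf.injOn.mono fun m hm => (mem_filter.mp hm).2.1

lemma card_filter_fin_lt_eq_count {n : ℕ} (P : ℕ → Prop) [DecidablePred P] (k : Fin n) :
    #{m : Fin n | P m ∧ m < k} = Nat.count P k := by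
  rw [Nat.count_eq_card_filter_range]
  refine card_nbij (fun m => (m : ℕ)) ?_ (fun a _ b _ h => Fin.ext h) ?_
  · intro m hm
    simp only [coe_filter, mem_univ, true_and, Set.mem_ofPred_eq] at hm
    simp only [coe_filter, mem_range, Set.mem_ofPred_eq]
    exact ⟨hm.2, hm.1⟩
  · intro i hi
    simp only [coe_filter, mem_range, Set.mem_ofPred_eq] at hi
    exact ⟨⟨i, hi.1.trans k.isLt⟩, by simpa using ⟨hi.2, hi.1⟩, rfl⟩

section hookCells

variable {n d : ℕ}

lemma mem_hookCells {x : ℕ × ℕ} :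
    x ∈ hookCells n d ↔ (x.1 = 0 ∧ x.2 < d) ∨ (x.2 = 0 ∧ x.1 < n - d + 1) := by
  obtain ⟨r, c⟩ := x
  simp only [hookCells, mem_union, mem_image, mem_range, Prod.mk.injEq]
  constructor
  · rintro (⟨c, hc, rfl, rfl⟩ | ⟨r, hr, rfl, rfl⟩)
    exacts [Or.inl ⟨rfl, hc⟩, Or.inr ⟨rfl, hr⟩]
  · rintro (⟨rfl, hc⟩ | ⟨rfl, hr⟩)
    exacts [Or.inl ⟨c, hc, rfl, rfl⟩, Or.inr ⟨r, hr, rfl, rfl⟩]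

lemma filter_hookCells_fst_eq_zero (hd : 1 ≤ d) :
    {x ∈ hookCells n d | x.1 = 0} = (range d).image fun c => (0, c) := by
  ext ⟨r, c⟩
  simp only [mem_filter, mem_hookCells, mem_image, mem_range, Prod.mk.injEq]
  constructor
  · rintro ⟨h | h, rfl⟩ <;> exact ⟨c, by omega, rfl, rfl⟩
  · rintro ⟨c, hc, rfl, rfl⟩
    exact ⟨Or.inl ⟨rfl, hc⟩, rfl⟩

lemma filter_hookCells_fst_ne_zero :
    {x ∈ hookCells n d | x.1 ≠ 0} = (range (n - d)).image fun r => (r + 1, 0) := by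
  ext ⟨r, c⟩
  simp only [mem_filter, mem_hookCells, mem_image, mem_range, Prod.mk.injEq]
  constructor
  · rintro ⟨h | h, hr⟩
    · omega
    · exact ⟨r - 1, by omega, by omega, h.1.symm⟩
  · rintro ⟨r, hr, rfl, rfl⟩
    exact ⟨Or.inr ⟨rfl, by omega⟩, by omega⟩

lemma card_filter_hookCells_fst_ne_zero : #{x ∈ hookCells n d | x.1 ≠ 0} = n - d := by
  rw [filter_hookCells_fst_ne_zero, card_image_of_injective _ fun a b h => by simpa using h,
    card_range]

lemma card_hookCells (hd : 1 ≤ d) (hdn : d ≤ n) : #(hookCells n d) = n := by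
  rw [← card_filter_add_card_filter_not (p := fun x : ℕ × ℕ => x.1 = 0),
    filter_hookCells_fst_eq_zero hd, card_filter_hookCells_fst_ne_zero,
    card_image_of_injective _ fun a b h => by simpa using h, card_range]
  omega

end hookCells

-- The cell of entry `k` (indexed as in `HookSYT.pos`) of the hook tableau whose leg holds the
-- entries in `S`.
def hookPos (S : Finset ℕ) (k : ℕ) : ℕ × ℕ :=
  if k ∈ S then (Nat.count (· ∈ S) k + 1, 0) else (0, Nat.count (· ∉ S) k)

section hookPos

variable {S : Finset ℕ}

lemma hookPos_injective (S : Finset ℕ) : Function.Injective (hookPos S) := by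
  intro i j h
  unfold hookPos at h
  split_ifs at h with hi hj hj <;> simp only [Prod.mk.injEq] at h
  · exact Nat.count_injective (p := (· ∈ S)) hi hj (by omega)
  · omega
  · omega
  · exact Nat.count_injective hi hj h.2

lemma hookPos_rowInc {i j : ℕ} (hrow : (hookPos S i).1 = (hookPos S j).1)
    (hcol : (hookPos S i).2 < (hookPos S j).2) : i < j := by
  unfold hookPos at hrow hcol
  split_ifs at hrow hcol
  all_goals simp only at hrow hcol
  all_goals first | omega | exact Nat.lt_of_count_lt_count hcol

lemma hookPos_colInc (h0 : 0 ∉ S) {i j : ℕ} (hcol : (hookPos S i).2 = (hookPos S j).2)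
    (hrow : (hookPos S i).1 < (hookPos S j).1) : i < j := by
  unfold hookPos at hrow hcol
  split_ifs at hrow hcol with hi hj hj
  all_goals simp only at hrow hcol
  · exact Nat.lt_of_count_lt_count (p := (· ∈ S)) (by omega)
  · omega
  · have hi0 : i = 0 := by
      by_contra hi0
      exact Nat.count_iff_forall_not.mp hcol 0 (by omega) h0
    have hj0 : j ≠ 0 := fun hj0 => h0 (hj0 ▸ hj)
    omega
  · omega

lemma count_mem_eq_card {n : ℕ} (hS : S ⊆ range n) : Nat.count (· ∈ S) n = #S := by
  rw [Nat.count_eq_card_filter_range, filter_mem_eq_inter, inter_eq_right.mpr hS]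

lemma count_notMem_eq_card {n : ℕ} (hS : S ⊆ range n) :
    Nat.count (· ∉ S) n = n - #S := by
  have h := card_filter_add_card_filter_not (s := range n) (· ∈ S)
  rw [card_range, ← Nat.count_eq_card_filter_range, ← Nat.count_eq_card_filter_range,
    count_mem_eq_card hS] at h
  omega

lemma hookPos_mem_hookCells {n d : ℕ} (hS : S ⊆ range n) (hcard : #S = n - d) (hdn : d ≤ n)
    {k : ℕ} (hk : k < n) : hookPos S k ∈ hookCells n d := by
  rw [hookPos, mem_hookCells]
  split_ifs with hkS
  · have := Nat.count_strict_mono (p := (· ∈ S)) hkS hk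
    rw [count_mem_eq_card hS] at this
    exact Or.inr ⟨rfl, by omega⟩
  · have := Nat.count_strict_mono (p := (· ∉ S)) hkS hk
    rw [count_notMem_eq_card hS] at this
    exact Or.inl ⟨rfl, by omega⟩

end hookPos

namespace HookSYT

variable {n d : ℕ} (τ : HookSYT n d)

lemma ext {τ₁ τ₂ : HookSYT n d} (h : τ₁.pos = τ₂.pos) : τ₁ = τ₂ := by
  cases τ₁
  cases τ₂
  congr

lemma Des_subset : Des τ ⊆ Icc 1 (n - 1) := filter_subset _ _

lemma image_pos (hd : 1 ≤ d) (hdn : d ≤ n) : univ.image τ.pos = hookCells n d :=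
  eq_of_subset_of_card_le (image_subset_iff.mpr fun k _ => τ.mem k) <| by
    rw [card_image_of_injective _ τ.inj, card_univ, Fintype.card_fin, card_hookCells hd hdn]

lemma card_filter_pos (hd : 1 ≤ d) (hdn : d ≤ n) (p : ℕ × ℕ → Prop) [DecidablePred p] :
    #{k | p (τ.pos k)} = #{x ∈ hookCells n d | p x} := by
  rw [← image_pos τ hd hdn, filter_image, card_image_of_injective _ τ.inj]

lemma strictMonoOn_row : StrictMonoOn (fun k => (τ.pos k).1) {k | (τ.pos k).2 = 0} := by
  intro m hm k hk hmk
  rcases lt_trichotomy (τ.pos m).1 (τ.pos k).1 with h | h | h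
  · exact h
  · exact absurd (τ.inj (Prod.ext h (hm.trans hk.symm))) hmk.ne
  · exact absurd (τ.colInc k m (hk.trans hm.symm) h) hmk.not_gt

lemma strictMonoOn_col : StrictMonoOn (fun k => (τ.pos k).2) {k | (τ.pos k).1 = 0} := by
  intro m hm k hk hmk
  rcases lt_trichotomy (τ.pos m).2 (τ.pos k).2 with h | h | h
  · exact h
  · exact absurd (τ.inj (Prod.ext (hm.trans hk.symm) h)) hmk.ne
  · exact absurd (τ.rowInc k m (hk.trans hm.symm) h) hmk.not_gt

lemma row_eq_card (hd : 1 ≤ d) (hdn : d ≤ n) {k : Fin n} (hk : (τ.pos k).2 = 0) :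
    (τ.pos k).1 = #{m | (τ.pos m).2 = 0 ∧ m < k} := by
  refine eq_card_filter_lt_of_strictMonoOn τ.strictMonoOn_row (fun k hk t ht => ?_) hk
  have hcell : (t, 0) ∈ hookCells n d := by
    have := mem_hookCells.mp (τ.mem k)
    exact mem_hookCells.mpr (Or.inr ⟨rfl, by omega⟩)
  obtain ⟨m, -, hm⟩ := mem_image.mp ((image_pos τ hd hdn).symm ▸ hcell)
  exact ⟨m, by simp [hm], by simp [hm]⟩

lemma col_eq_card (hd : 1 ≤ d) (hdn : d ≤ n) {k : Fin n} (hk : (τ.pos k).1 = 0) :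
    (τ.pos k).2 = #{m | (τ.pos m).1 = 0 ∧ m < k} := by
  refine eq_card_filter_lt_of_strictMonoOn τ.strictMonoOn_col (fun k hk t ht => ?_) hk
  have hcell : (0, t) ∈ hookCells n d := by
    have := mem_hookCells.mp (τ.mem k)
    exact mem_hookCells.mpr (Or.inl ⟨rfl, by omega⟩)
  obtain ⟨m, -, hm⟩ := mem_image.mp ((image_pos τ hd hdn).symm ▸ hcell)
  exact ⟨m, by simp [hm], by simp [hm]⟩

lemma pos_of_val_eq_zero (hd : 1 ≤ d) (hdn : d ≤ n) {k : Fin n} (hk : (k : ℕ) = 0) :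
    τ.pos k = (0, 0) := by
  have hnone : ∀ P : Fin n → Prop, ∀ _ : DecidablePred P, #{m | P m ∧ m < k} = 0 := by
    intro P _
    simp [Fin.lt_def, hk]
  have hrow : (τ.pos k).1 = 0 := by
    rcases mem_hookCells.mp (τ.mem k) with ⟨h, -⟩ | ⟨h, -⟩
    · exact h
    · rw [τ.row_eq_card hd hdn h, hnone]
  rw [← Prod.mk.eta (p := τ.pos k), hrow, τ.col_eq_card hd hdn hrow, hnone]

lemma mem_Des_iff (hd : 1 ≤ d) (hdn : d ≤ n) (k : Fin n) :
    (k : ℕ) ∈ Des τ ↔ (τ.pos k).1 ≠ 0 := by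
  simp only [Des, mem_filter, mem_Icc]
  constructor
  · rintro ⟨-, hk, hk', hlt⟩
    exact Nat.pos_iff_ne_zero.mp ((Nat.zero_le _).trans_lt hlt)
  · intro hrow
    have hk : (k : ℕ) ≠ 0 := fun hk => hrow (by rw [τ.pos_of_val_eq_zero hd hdn hk])
    have hcol : (τ.pos k).2 = 0 := by
      rcases mem_hookCells.mp (τ.mem k) with ⟨h, -⟩ | ⟨h, -⟩
      exacts [absurd h hrow, h]
    refine ⟨⟨by omega, by omega⟩, k.isLt, by omega, ?_⟩
    change (τ.pos ⟨k - 1, _⟩).1 < (τ.pos k).1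
    by_cases hprev : (τ.pos ⟨k - 1, by omega⟩).2 = 0
    · exact τ.strictMonoOn_row hprev hcol (Fin.mk_lt_of_lt_val (by omega))
    · rcases mem_hookCells.mp (τ.mem ⟨k - 1, by omega⟩) with ⟨h, -⟩ | ⟨h, -⟩
      exacts [by simp only [h]; omega, absurd h hprev]

lemma snd_pos_eq_zero_iff (hd : 1 ≤ d) (hdn : d ≤ n) (k : Fin n) :
    (τ.pos k).2 = 0 ↔ (k : ℕ) = 0 ∨ (k : ℕ) ∈ Des τ := by
  rw [τ.mem_Des_iff hd hdn]
  constructor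
  · intro hcol
    by_cases hrow : (τ.pos k).1 = 0
    · left
      have h0 : τ.pos ⟨0, by omega⟩ = (0, 0) := τ.pos_of_val_eq_zero hd hdn rfl
      rw [τ.inj ((Prod.ext hrow hcol).trans h0.symm)]
    · exact Or.inr hrow
  · rintro (hk | hrow)
    · simp [τ.pos_of_val_eq_zero hd hdn hk]
    · rcases mem_hookCells.mp (τ.mem k) with ⟨h, -⟩ | ⟨h, -⟩
      exacts [absurd h hrow, h]

lemma pos_eq_hookPos (hd : 1 ≤ d) (hdn : d ≤ n) (k : Fin n) :
    τ.pos k = hookPos (Des τ) k := by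
  by_cases hk : (k : ℕ) ∈ Des τ
  · have hrow := (τ.mem_Des_iff hd hdn k).mp hk
    have hcol := (τ.snd_pos_eq_zero_iff hd hdn k).mpr (Or.inr hk)
    have hk0 : (k : ℕ) ≠ 0 := by have := mem_Icc.mp (τ.Des_subset hk); omega
    obtain ⟨j, hj⟩ := Nat.exists_eq_add_one_of_ne_zero hk0
    have hcount :
        Nat.count (fun i => i = 0 ∨ i ∈ Des τ) k = Nat.count (· ∈ Des τ) k + 1 := by
      have h0 : 0 ∉ Des τ := fun h => by simpa using τ.Des_subset h
      simp [hj, Nat.count_succ', h0]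
    rw [hookPos, if_pos hk]
    refine Prod.ext ?_ hcol
    rw [τ.row_eq_card hd hdn hcol, ← hcount, ← card_filter_fin_lt_eq_count]
    simp only [τ.snd_pos_eq_zero_iff hd hdn]
  · have hrow : (τ.pos k).1 = 0 := by simpa [τ.mem_Des_iff hd hdn] using hk
    rw [hookPos, if_neg hk]
    refine Prod.ext hrow ?_
    rw [τ.col_eq_card hd hdn hrow, ← card_filter_fin_lt_eq_count]
    simp only [τ.mem_Des_iff hd hdn, not_not]

lemma Des_injective (hd : 1 ≤ d) (hdn : d ≤ n) :
    Function.Injective (Des : HookSYT n d → Finset ℕ) := fun τ₁ τ₂ h =>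
  ext <| funext fun k => by rw [τ₁.pos_eq_hookPos hd hdn, τ₂.pos_eq_hookPos hd hdn, h]

lemma card_Des (hd : 1 ≤ d) (hdn : d ≤ n) : #(Des τ) = n - d := by
  have hDes : Des τ = (univ.filter fun k => (τ.pos k).1 ≠ 0).map Fin.valEmbedding := by
    ext i
    simp only [mem_map, mem_filter, mem_univ, true_and, Fin.valEmbedding_apply]
    constructor
    · intro hi
      have := mem_Icc.mp (τ.Des_subset hi)
      exact ⟨⟨i, by omega⟩, (τ.mem_Des_iff hd hdn ⟨i, by omega⟩).mp hi, rfl⟩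
    · rintro ⟨k, hk, rfl⟩
      exact (τ.mem_Des_iff hd hdn k).mpr hk
  rw [hDes, card_map, τ.card_filter_pos hd hdn (fun x => x.1 ≠ 0),
    card_filter_hookCells_fst_ne_zero]

lemma exists_Des_eq (hd : 1 ≤ d) (hdn : d ≤ n) {S : Finset ℕ}
    (hS : S ⊆ Icc 1 (n - 1)) (hcard : #S = n - d) : ∃ τ : HookSYT n d, Des τ = S := by
  have hSrange : S ⊆ range n := fun i hi => by have := mem_Icc.mp (hS hi); rw [mem_range]; omega
  have h0 : 0 ∉ S := fun h => by simpa using hS h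
  let τ : HookSYT n d :=
    { pos := fun k => hookPos S k
      mem := fun k => hookPos_mem_hookCells hSrange hcard hdn k.isLt
      inj := fun i j h => Fin.ext (hookPos_injective S h)
      rowInc := fun i j hrow hcol => hookPos_rowInc hrow hcol
      colInc := fun i j hcol hrow => hookPos_colInc h0 hcol hrow }
  refine ⟨τ, Finset.ext fun i => ?_⟩
  by_cases hi : i ∈ Icc 1 (n - 1)
  · have hin : i < n := by have := mem_Icc.mp hi; omega
    rw [τ.mem_Des_iff hd hdn ⟨i, hin⟩]
    show (hookPos S i).1 ≠ 0 ↔ i ∈ S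
    unfold hookPos
    split_ifs with hiS <;> simp [hiS]
  · exact iff_of_false (fun h => hi (τ.Des_subset h)) (fun h => hi (hS h))

end HookSYT

lemma Mmap_mem_SchT {n d : ℕ} (hd : 1 ≤ d) (hdn : d ≤ n) (τ : HookSYT n d) :
    Mmap n d τ ∈ SchT n (d - 1) 0 := by
  have htrue := count_true_descentBlocks τ.Des_subset (by omega)
  have hfalse := List.count_true_add_count_false (descentBlocks n (Des τ))
  rw [length_descentBlocks] at hfalse
  rw [τ.card_Des hd hdn] at htrue
  rw [Mmap_eq_ofBlocks]
  refine ⟨isSchroeder_ofBlocks _, ?_, ?_, area_ofBlocks _, ?_⟩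
  · rw [cnt_D_ofBlocks]
    omega
  · rw [cnt_N_ofBlocks]
    omega
  · exact exists_ofBlocks_eq_append_iff.mpr (getLast?_descentBlocks _ (by omega))

lemma exists_Mmap_eq_of_mem_SchT {n d : ℕ} (hd : 1 ≤ d) (hdn : d ≤ n) {g : List Step}
    (hg : g ∈ SchT n (d - 1) 0) : ∃ τ : HookSYT n d, Mmap n d τ = g := by
  obtain ⟨hsch, hD, hN, harea, hlast⟩ := hg
  obtain ⟨b, rfl⟩ := exists_ofBlocks_eq_of_area_eq_zero hsch harea
  rw [cnt_D_ofBlocks] at hD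
  rw [cnt_N_ofBlocks] at hN
  have hlen : b.length = n := by
    have := List.count_true_add_count_false b
    omega
  obtain ⟨S, hS, rfl⟩ := exists_descentBlocks_eq hlen (exists_ofBlocks_eq_append_iff.mp hlast)
  rw [count_true_descentBlocks hS (by omega)] at hN
  obtain ⟨τ, hτ⟩ := HookSYT.exists_Des_eq hd hdn hS (by omega)
  exact ⟨τ, by rw [Mmap_eq_ofBlocks, hτ]⟩

/-- The map `M_{n,d}` is a bijection from `SYT(d, 1^{n-d})` onto the set
of Schröder paths in an `n×n` grid with `d-1` diagonal steps, area `0`, ending in `NE`,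
and satisfies `maj(τ) = bounce(M_{n,d}(τ))`. -/
theorem stmt14 (n d : ℕ) (hd : 1 ≤ d) (hdn : d ≤ n) :
    Function.Injective (Mmap n d) ∧
    Set.range (Mmap n d) = SchT n (d-1) 0 ∧
    ∀ τ : HookSYT n d, majT τ = bounce (Mmap n d τ) := by
  refine ⟨fun τ₁ τ₂ h => ?_, ?_, fun τ => ?_⟩
  · rw [Mmap_eq_ofBlocks, Mmap_eq_ofBlocks] at h
    exact HookSYT.Des_injective hd hdn
      (descentBlocks_injOn τ₁.Des_subset τ₂.Des_subset (ofBlocks_injective h))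
  · exact Set.Subset.antisymm (Set.range_subset_iff.mpr (Mmap_mem_SchT hd hdn))
      fun g hg => exists_Mmap_eq_of_mem_SchT hd hdn hg
  · have htrue : true ∈ descentBlocks n (Des τ) :=
      List.count_pos_iff.mp (by rw [count_true_descentBlocks τ.Des_subset (by omega)]; omega)
    rw [Mmap_eq_ofBlocks, bounce_ofBlocks htrue, tailLengthSum_descentBlocks τ.Des_subset, majT]
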